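/- Generalized Bihari's inequality for the oracle dynamics of GLBISS: Under the continuous RSC assumption, for all t ≥ 0 the potential Ψ(t) satisfies dΨ(t)/dt ≤ −λ·F⁻¹(Ψ(t)). -/

import Mathlib

open scoped BigOperators

/-- The soft-thresholding (shrinkage) operator `𝒮(·,1)` applied entrywise. -/
noncomputable def soft (x : ℝ) : ℝ := Real.sign x * max (|x| - 1) 0

/-- Partial derivative of the loss `ℓ` at `θ` in coordinate `i`
(the intercept coordinate is `none`). -/
noncomputable def gradAt {p : ℕ} (ℓ : (Option (Fin p) → ℝ) → ℝ)
    (θ : Option (Fin p) → ℝ) (i : Option (Fin p)) : ℝ :=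
  fderiv ℝ ℓ θ (Pi.single i 1)

/-- Second partial derivative (Hessian entry) of `ℓ` at `θ`. -/
noncomputable def pderiv2 {p : ℕ} (ℓ : (Option (Fin p) → ℝ) → ℝ)
    (θ : Option (Fin p) → ℝ) (i j : Option (Fin p)) : ℝ :=
  fderiv ℝ (fun θ' => gradAt ℓ θ' j) θ (Pi.single i 1)

/-- `H̄(θ) = ∫₀¹ ∇²ℓ(θ⋆ + μ(θ − θ⋆)) dμ`, entrywise. -/
noncomputable def Hbar {p : ℕ} (ℓ : (Option (Fin p) → ℝ) → ℝ)
    (θstar θ : Option (Fin p) → ℝ) (i j : Option (Fin p)) : ℝ :=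
  ∫ μ in (0:ℝ)..(1:ℝ), pderiv2 ℓ (fun l => θstar l + μ * (θ l - θstar l)) i j

/-- Point on the segment from `θa` to `θb` at parameter `μ`. -/
def segPt {p : ℕ} (θa θb : Option (Fin p) → ℝ) (μ : ℝ) : Option (Fin p) → ℝ :=
  fun i => θa i + μ * (θb i - θa i)

/-- `θo` is an oracle estimator: it minimizes `ℓ` over `{θ : β_{Sᶜ} = 0}`. -/
def OracleEst {p : ℕ} (ℓ : (Option (Fin p) → ℝ) → ℝ) (S : Finset (Fin p))
    (θo : Option (Fin p) → ℝ) : Prop :=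
  (∀ j, j ∉ S → θo (some j) = 0) ∧
  ∀ θ : Option (Fin p) → ℝ, (∀ j, j ∉ S → θ (some j) = 0) → ℓ θo ≤ ℓ θ

/-- The GLBI iteration with parameters `κ, δ`:
`α_{k+1} = α_k − κδ∇_α ℓ(θ_k)`, `z_{k+1} = z_k − δ∇_β ℓ(θ_k)`, `β_{k+1} = κ𝒮(z_{k+1},1)`,
with `z_0 = β_0 = 0` (the initial intercept is arbitrary). -/
def GLBIIter {p : ℕ} (ℓ : (Option (Fin p) → ℝ) → ℝ) (κ δ : ℝ)
    (θ : ℕ → Option (Fin p) → ℝ) (z : ℕ → Fin p → ℝ) : Prop :=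
  (∀ j, z 0 j = 0) ∧ (∀ j, θ 0 (some j) = 0) ∧
  (∀ k, θ (k+1) none = θ k none - κ * δ * gradAt ℓ (θ k) none) ∧
  (∀ k j, z (k+1) j = z k j - δ * gradAt ℓ (θ k) (some j)) ∧
  (∀ k j, θ (k+1) (some j) = κ * soft (z (k+1) j))

/-- The oracle iteration: same recursion as GLBI but restricted to coordinates in `S`,
with `z'_{k,Sᶜ} = β'_{k,Sᶜ} = 0`. -/
def OracleIter {p : ℕ} (ℓ : (Option (Fin p) → ℝ) → ℝ) (S : Finset (Fin p)) (κ δ : ℝ)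
    (θ' : ℕ → Option (Fin p) → ℝ) (z' : ℕ → Fin p → ℝ) : Prop :=
  (∀ j, z' 0 j = 0) ∧ (∀ j, θ' 0 (some j) = 0) ∧
  (∀ k j, j ∉ S → z' k j = 0) ∧ (∀ k j, j ∉ S → θ' k (some j) = 0) ∧
  (∀ k, θ' (k+1) none = θ' k none - κ * δ * gradAt ℓ (θ' k) none) ∧
  (∀ k, ∀ j ∈ S, z' (k+1) j = z' k j - δ * gradAt ℓ (θ' k) (some j)) ∧
  (∀ k, ∀ j ∈ S, θ' (k+1) (some j) = κ * soft (z' (k+1) j))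

/-- Restricted strong convexity: `λ I ⪯ ∇²_{S_α,S_α} ℓ(θ) ⪯ Λ I` for every `θ` on the
segment between `θ'_k` and `θᵒ` (any `k ≥ 0`) or between `θ⋆` and `θᵒ`, stated via
quadratic forms on vectors supported on `S_α` (the intercept together with `S`). -/
def RSCcond {p : ℕ} (ℓ : (Option (Fin p) → ℝ) → ℝ) (S : Finset (Fin p))
    (θstar θo : Option (Fin p) → ℝ) (θ' : ℕ → Option (Fin p) → ℝ) (lam Lam : ℝ) : Prop :=
  ∀ θ : Option (Fin p) → ℝ,
    ((∃ k : ℕ, ∃ μ ∈ Set.Icc (0:ℝ) 1, θ = segPt (θ' k) θo μ) ∨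
      (∃ μ ∈ Set.Icc (0:ℝ) 1, θ = segPt θstar θo μ)) →
    ∀ v : Option (Fin p) → ℝ, (∀ j, j ∉ S → v (some j) = 0) →
      lam * ∑ i, v i ^ 2 ≤ ∑ i, ∑ i', v i * pderiv2 ℓ θ i i' * v i' ∧
      ∑ i, ∑ i', v i * pderiv2 ℓ θ i i' * v i' ≤ Lam * ∑ i, v i ^ 2

/-- `irr̄ = H̄_{Sᶜ,S_α}(θ) · H̄_{S_α,S_α}(θ)⁻¹`. -/
noncomputable def irrMat {p : ℕ} (ℓ : (Option (Fin p) → ℝ) → ℝ)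
    (θstar : Option (Fin p) → ℝ) (S : Finset (Fin p)) (θk : Option (Fin p) → ℝ) :
    Matrix {j : Fin p // j ∉ S} (Option {j : Fin p // j ∈ S}) ℝ :=
  (Matrix.of fun (jc : {j : Fin p // j ∉ S}) (a : Option {j : Fin p // j ∈ S}) =>
      Hbar ℓ θstar θk (some jc.1) (Option.map Subtype.val a)) *
    (Matrix.of fun (a b : Option {j : Fin p // j ∈ S}) =>
      Hbar ℓ θstar θk (Option.map Subtype.val a) (Option.map Subtype.val b))⁻¹

/-- The increment vector `((α'_{k+1}/κ, z'_{k+1,S}) − (α'_k/κ, z'_{k,S}))` on `S_α`. -/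
noncomputable def oracleDiff {p : ℕ} (κ : ℝ) (θ' : ℕ → Option (Fin p) → ℝ)
    (z' : ℕ → Fin p → ℝ) (S : Finset (Fin p)) (k : ℕ) :
    Option {j : Fin p // j ∈ S} → ℝ :=
  fun a =>
    match a with
    | none => θ' (k+1) none / κ - θ' k none / κ
    | some j => z' (k+1) j.1 - z' k j.1

/-- Irrepresentable condition:
`sup_{K ≥ 1} ‖Σ_{k<K} irr̄_k ((α'_{k+1}/κ, z'_{k+1,S}) − (α'_k/κ, z'_{k,S}))‖_∞ < 1 − η/2`
and `sup_k ‖irr̄_k‖_∞ ≤ C` (maximum absolute row sums). -/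
def IRRcond {p : ℕ} (ℓ : (Option (Fin p) → ℝ) → ℝ) (θstar : Option (Fin p) → ℝ)
    (S : Finset (Fin p)) (κ : ℝ) (θ' : ℕ → Option (Fin p) → ℝ) (z' : ℕ → Fin p → ℝ)
    (η C : ℝ) : Prop :=
  (∃ b, b < 1 - η / 2 ∧ ∀ K : ℕ, 1 ≤ K → ∀ jc : {j : Fin p // j ∉ S},
      |∑ k ∈ Finset.range K,
        ((irrMat ℓ θstar S (θ' k)).mulVec (oracleDiff κ θ' z' S k)) jc| ≤ b) ∧
  (∀ k : ℕ, ∀ jc : {j : Fin p // j ∉ S},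
      ∑ a : Option {j : Fin p // j ∈ S}, |irrMat ℓ θstar S (θ' k) jc a| ≤ C)

/-- `‖∇ℓ(θ)‖_∞`. -/
noncomputable def gradInfNorm {p : ℕ} (ℓ : (Option (Fin p) → ℝ) → ℝ)
    (θ : Option (Fin p) → ℝ) : ℝ :=
  ⨆ i : Option (Fin p), |gradAt ℓ θ i|

/-- `d_k = ‖(α'_k, β'_{k,S}) − (αᵒ, βᵒ_S)‖₂`. -/
noncomputable def dOrc {p : ℕ} (S : Finset (Fin p)) (θo : Option (Fin p) → ℝ)
    (θ' : ℕ → Option (Fin p) → ℝ) (k : ℕ) : ℝ :=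
  Real.sqrt ((θ' k none - θo none) ^ 2 + ∑ j ∈ S, (θ' k (some j) - θo (some j)) ^ 2)

/-- `β^o_min = min{|βᵒ_j| : βᵒ_j ≠ 0}`. -/
noncomputable def bomin {p : ℕ} (θo : Option (Fin p) → ℝ) : ℝ :=
  sInf {r : ℝ | ∃ j : Fin p, θo (some j) ≠ 0 ∧ r = |θo (some j)|}

/-- The function `F` of the (discrete) generalized Bihari inequality. -/
noncomputable def Fpot (κ bo : ℝ) (s : ℕ) (x : ℝ) : ℝ :=
  x / (2 * κ) +
    (if x < bo ^ 2 then 0 else if x < s * bo ^ 2 then 2 * x / bo else 2 * Real.sqrt (s * x))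

/-- `F⁻¹(x) = inf{y ≥ 0 : F(y) ≥ x}`. -/
noncomputable def FpotInv (κ bo : ℝ) (s : ℕ) (x : ℝ) : ℝ :=
  sInf {y : ℝ | 0 ≤ y ∧ x ≤ Fpot κ bo s y}

/-- The potential `Ψ_k = ‖βᵒ_S‖₁ − ⟨βᵒ_S, ρ'_{k,S}⟩ + d_k²/(2κ)` of the oracle iteration,
where `ρ'_{k} = z'_k − 𝒮(z'_k,1)`. -/
noncomputable def PsiD {p : ℕ} (S : Finset (Fin p)) (θo : Option (Fin p) → ℝ) (κ : ℝ)
    (θ' : ℕ → Option (Fin p) → ℝ) (z' : ℕ → Fin p → ℝ) (k : ℕ) : ℝ :=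
  (∑ j ∈ S, |θo (some j)|) - (∑ j ∈ S, θo (some j) * (z' k j - soft (z' k j))) +
    (dOrc S θo θ' k) ^ 2 / (2 * κ)

/-- Pack an intercept `a` and a coefficient vector `b` into a parameter `θ`. -/
def pack {p : ℕ} (a : ℝ) (b : Fin p → ℝ) : Option (Fin p) → ℝ :=
  fun i => Option.elim i a b

/-- The GLBISS differential inclusion with parameter `κ`:
`α̇(t)/κ = −∇_α ℓ(θ(t))`, `ρ̇(t) + β̇(t)/κ = −∇_β ℓ(θ(t))`, `ρ(t) ∈ ∂‖β(t)‖₁`,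
with `ρ(0) = β(0) = 0`. -/
def GLBISSPath {p : ℕ} (ℓ : (Option (Fin p) → ℝ) → ℝ) (κ : ℝ)
    (a : ℝ → ℝ) (b ρf : ℝ → Fin p → ℝ) : Prop :=
  (∀ j, ρf 0 j = 0) ∧ (∀ j, b 0 j = 0) ∧
  (∀ t, 0 ≤ t → HasDerivAt a (-(κ * gradAt ℓ (pack (a t) (b t)) none)) t) ∧
  (∀ t, 0 ≤ t → ∀ j, HasDerivAt (fun u => ρf u j + b u j / κ)
      (-gradAt ℓ (pack (a t) (b t)) (some j)) t) ∧
  (∀ t, 0 ≤ t → ∀ j, (b t j ≠ 0 → ρf t j = Real.sign (b t j)) ∧ |ρf t j| ≤ 1)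

/-- The oracle dynamics of GLBISS: the same differential inclusion restricted to the
coordinates in `S`, with `ρ'_{Sᶜ}(t) = β'_{Sᶜ}(t) ≡ 0`. -/
def OracleDynC {p : ℕ} (ℓ : (Option (Fin p) → ℝ) → ℝ) (S : Finset (Fin p)) (κ : ℝ)
    (a : ℝ → ℝ) (b ρf : ℝ → Fin p → ℝ) : Prop :=
  (∀ j, ρf 0 j = 0) ∧ (∀ j, b 0 j = 0) ∧
  (∀ t j, j ∉ S → ρf t j = 0 ∧ b t j = 0) ∧
  (∀ t, 0 ≤ t → HasDerivAt a (-(κ * gradAt ℓ (pack (a t) (b t)) none)) t) ∧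
  (∀ t, 0 ≤ t → ∀ j ∈ S, HasDerivAt (fun u => ρf u j + b u j / κ)
      (-gradAt ℓ (pack (a t) (b t)) (some j)) t) ∧
  (∀ t, 0 ≤ t → ∀ j ∈ S, (b t j ≠ 0 → ρf t j = Real.sign (b t j)) ∧ |ρf t j| ≤ 1)

/-- Continuous restricted strong convexity: `λ I ⪯ ∇²_{S_α,S_α} ℓ(θ) ⪯ Λ I` on the
segments between `θ'(t)` and `θᵒ` for any `t ≥ 0`, and between `θ⋆` and `θᵒ`. -/
def RSCcondC {p : ℕ} (ℓ : (Option (Fin p) → ℝ) → ℝ) (S : Finset (Fin p))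
    (θstar θo : Option (Fin p) → ℝ) (a : ℝ → ℝ) (b : ℝ → Fin p → ℝ) (lam Lam : ℝ) : Prop :=
  ∀ θ : Option (Fin p) → ℝ,
    ((∃ t : ℝ, 0 ≤ t ∧ ∃ μ ∈ Set.Icc (0:ℝ) 1, θ = segPt (pack (a t) (b t)) θo μ) ∨
      (∃ μ ∈ Set.Icc (0:ℝ) 1, θ = segPt θstar θo μ)) →
    ∀ v : Option (Fin p) → ℝ, (∀ j, j ∉ S → v (some j) = 0) →
      lam * ∑ i, v i ^ 2 ≤ ∑ i, ∑ i', v i * pderiv2 ℓ θ i i' * v i' ∧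
      ∑ i, ∑ i', v i * pderiv2 ℓ θ i i' * v i' ≤ Lam * ∑ i, v i ^ 2

/-- Continuous irrepresentable condition:
`sup_{T ≥ 0} ‖∫₀ᵀ irr̄(t)·(α̇'(t)/κ, ż'_S(t)) dt‖_∞ < 1 − η/2` (where, along the oracle
dynamics, `(α̇'(t)/κ, ż'_S(t)) = −∇_{S_α}ℓ(θ'(t))`) and `sup_{t ≥ 0} ‖irr̄(t)‖_∞ ≤ C`. -/
def IRRcondC {p : ℕ} (ℓ : (Option (Fin p) → ℝ) → ℝ) (θstar : Option (Fin p) → ℝ)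
    (S : Finset (Fin p)) (a : ℝ → ℝ) (b : ℝ → Fin p → ℝ) (η C : ℝ) : Prop :=
  (∃ bd, bd < 1 - η / 2 ∧ ∀ T : ℝ, 0 ≤ T → ∀ jc : {j : Fin p // j ∉ S},
      |∫ t in (0:ℝ)..T,
        ((irrMat ℓ θstar S (pack (a t) (b t))).mulVec
          (fun i => -gradAt ℓ (pack (a t) (b t)) (Option.map Subtype.val i))) jc| ≤ bd) ∧
  (∀ t : ℝ, 0 ≤ t → ∀ jc : {j : Fin p // j ∉ S},
      ∑ i : Option {j : Fin p // j ∈ S}, |irrMat ℓ θstar S (pack (a t) (b t)) jc i| ≤ C)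

/-- `d(t) = ‖(α'(t), β'_S(t)) − (αᵒ, βᵒ_S)‖₂`. -/
noncomputable def dOrcC {p : ℕ} (S : Finset (Fin p)) (θo : Option (Fin p) → ℝ)
    (a : ℝ → ℝ) (b : ℝ → Fin p → ℝ) (t : ℝ) : ℝ :=
  Real.sqrt ((a t - θo none) ^ 2 + ∑ j ∈ S, (b t j - θo (some j)) ^ 2)

/-!
Along the oracle dynamics `ρ'_j` sits at `±1` wherever `β'_j ≠ 0`, so it is extremal there and
`⟨β', ρ̇'⟩ = 0`. Hence `Ψ̇ = -⟨θ' - θᵒ, ∇ℓ(θ')⟩`. Since `∇_{S_α} ℓ(θᵒ) = 0` and, by the mean value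
theorem on the segment `[θᵒ, θ']`, RSC gives `⟨θ' - θᵒ, ∇ℓ(θ') - ∇ℓ(θᵒ)⟩ ≥ λ d²`, we get
`Ψ̇ ≤ -λ d²`. On the other hand a coordinate `j` contributes to `‖βᵒ_S‖₁ - ⟨βᵒ_S, ρ'_S⟩` only if
`|β'_j - βᵒ_j| ≥ |βᵒ_j| ≥ βᵒ_min`, and then by at most `2 |β'_j - βᵒ_j|`; counting such coordinates
(none if `d² < βᵒ_min²`, Cauchy–Schwarz in general) gives `Ψ ≤ F(d²)`, i.e. `F⁻¹(Ψ) ≤ d²`.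
-/

open Filter Topology Set Finset

section Calculus

variable {p : ℕ}

theorem sum_mul_gradAt (f : (Option (Fin p) → ℝ) → ℝ) (θ v : Option (Fin p) → ℝ) :
    ∑ i, v i * gradAt f θ i = fderiv ℝ f θ v := by
  conv_rhs => rw [← Finset.univ_sum_single v, map_sum]
  refine sum_congr rfl fun i _ => ?_
  rw [show Pi.single i (v i) = v i • Pi.single i (1 : ℝ) by
    rw [← Pi.single_smul', smul_eq_mul, mul_one], map_smul, smul_eq_mul]
  rfl

theorem hasDerivAt_gradAt {ℓ : (Option (Fin p) → ℝ) → ℝ} (hℓ : ContDiff ℝ 2 ℓ)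
    {c : ℝ → Option (Fin p) → ℝ} {c' : Option (Fin p) → ℝ} {μ : ℝ} (hc : HasDerivAt c c' μ)
    (i' : Option (Fin p)) :
    HasDerivAt (fun u => gradAt ℓ (c u) i') (∑ i, c' i * pderiv2 ℓ (c μ) i i') μ := by
  have hG : Differentiable ℝ fun θ => gradAt ℓ θ i' :=
    ((hℓ.fderiv_right le_rfl).differentiable one_ne_zero).clm_apply (differentiable_const _)
  rw [show ∑ i, c' i * pderiv2 ℓ (c μ) i i' = _ from sum_mul_gradAt _ (c μ) c']
  exact (hG (c μ)).hasFDerivAt.comp_hasDerivAt μ hc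

theorem mul_sum_sq_le_sum_mul_gradAt_sub {ℓ : (Option (Fin p) → ℝ) → ℝ} (hℓ : ContDiff ℝ 2 ℓ)
    (θ v : Option (Fin p) → ℝ) {lam : ℝ}
    (hconv : ∀ μ ∈ Icc (0 : ℝ) 1,
      lam * ∑ i, v i ^ 2 ≤ ∑ i, ∑ i', v i * pderiv2 ℓ (θ + μ • v) i i' * v i') :
    lam * ∑ i, v i ^ 2 ≤ ∑ i, v i * gradAt ℓ (θ + v) i - ∑ i, v i * gradAt ℓ θ i := by
  set g : ℝ → ℝ := fun μ => ∑ i, v i * gradAt ℓ (θ + μ • v) i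
  have hg : ∀ μ, HasDerivAt g (∑ i, ∑ i', v i * pderiv2 ℓ (θ + μ • v) i i' * v i') μ := by
    intro μ
    have hline : HasDerivAt (fun u : ℝ => θ + u • v) v μ := by
      simpa using ((hasDerivAt_id μ).smul_const v).const_add θ
    refine (HasDerivAt.fun_sum fun i' _ =>
      (hasDerivAt_gradAt hℓ hline i').const_mul (v i')).congr_deriv ?_
    simp only [mul_sum]
    rw [sum_comm]
    exact sum_congr rfl fun _ _ => sum_congr rfl fun _ _ => by ring
  obtain ⟨c, hc, hslope⟩ := exists_hasDerivAt_eq_slope g _ one_pos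
    (fun μ _ => (hg μ).continuousAt.continuousWithinAt) (fun μ _ => hg μ)
  calc lam * ∑ i, v i ^ 2 ≤ _ := hconv c (Ioo_subset_Icc_self hc)
    _ = g 1 - g 0 := by rw [hslope]; ring
    _ = _ := by simp [g]

theorem OracleEst.sum_mul_gradAt_eq_zero {ℓ : (Option (Fin p) → ℝ) → ℝ} {S : Finset (Fin p)}
    {θo : Option (Fin p) → ℝ} (hθo : OracleEst ℓ S θo) (hℓ : DifferentiableAt ℝ ℓ θo)
    {v : Option (Fin p) → ℝ} (hv : ∀ j, j ∉ S → v (some j) = 0) :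
    ∑ i, v i * gradAt ℓ θo i = 0 := by
  rw [sum_mul_gradAt]
  have hline : HasDerivAt (fun c : ℝ => θo + c • v) v 0 := by
    simpa using ((hasDerivAt_id (0 : ℝ)).smul_const v).const_add θo
  have hmin : IsLocalMin (ℓ ∘ fun c : ℝ => θo + c • v) 0 :=
    Eventually.of_forall fun c => by
      simpa using hθo.2 _ fun j hj => by simp [hθo.1 j hj, hv j hj]
  exact hmin.hasDerivAt_eq_zero (hℓ.hasFDerivAt.comp_hasDerivAt_of_eq 0 hline (by simp))

end Calculus

theorem HasDerivAt.eq_zero_of_abs_le_one {f : ℝ → ℝ} {f' t : ℝ} (hf : HasDerivAt f f' t)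
    (hle : ∀ᶠ u in 𝓝 t, |f u| ≤ 1) (ht : |f t| = 1) : f' = 0 := by
  rcases (abs_eq zero_le_one).mp ht with h | h
  · refine IsLocalMax.hasDerivAt_eq_zero ?_ hf
    filter_upwards [hle] with u hu
    exact h ▸ (abs_le.mp hu).2
  · refine IsLocalMin.hasDerivAt_eq_zero ?_ hf
    filter_upwards [hle] with u hu
    exact h ▸ (abs_le.mp hu).1

theorem abs_sub_mul_le_two_mul_abs {x ρ : ℝ} (hρ : |ρ| ≤ 1) : |x| - x * ρ ≤ 2 * |x| := by
  have h := neg_abs_le (x * ρ)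
  rw [abs_mul] at h
  nlinarith [abs_nonneg x]

theorem abs_le_abs_sub_of_abs_sub_mul_ne_zero {x b ρ : ℝ} (hsign : b ≠ 0 → ρ = Real.sign b)
    (h : |x| - x * ρ ≠ 0) : |x| ≤ |b - x| := by
  by_contra! hlt
  have hbx : 0 < b * x := by nlinarith [sq_lt_sq.mpr hlt, sq_nonneg b]
  apply h
  rcases lt_or_gt_of_ne (left_ne_zero_of_mul hbx.ne') with hb | hb
  · rw [hsign hb.ne, Real.sign_of_neg hb, abs_of_neg (by nlinarith)]
    ring
  · rw [hsign hb.ne', Real.sign_of_pos hb, abs_of_pos (by nlinarith)]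
    ring

theorem two_mul_sum_abs_le {ι : Type*} (B : Finset ι) (w : ι → ℝ) {bo x : ℝ} {s : ℕ}
    (hbo : 0 ≤ bo) (hw : ∀ j ∈ B, bo ≤ |w j|) (hx : ∑ j ∈ B, w j ^ 2 ≤ x) (hs : B.card ≤ s) :
    2 * ∑ j ∈ B, |w j| ≤
      if x < bo ^ 2 then 0 else if x < s * bo ^ 2 then 2 * x / bo else 2 * √(s * x) := by
  have hx0 : 0 ≤ x := (sum_nonneg fun j _ => sq_nonneg (w j)).trans hx
  have hsq : ∀ j ∈ B, w j ^ 2 ≤ x := fun j hj =>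
    (single_le_sum (fun j _ => sq_nonneg (w j)) hj).trans hx
  split_ifs with h1 h2
  · have hB : B = ∅ := Finset.eq_empty_of_forall_notMem fun j hj => by
      have := pow_le_pow_left₀ hbo (hw j hj) 2
      rw [sq_abs] at this
      linarith [hsq j hj]
    simp [hB]
  · have hbo' : 0 < bo := hbo.lt_of_ne fun h => by simp [← h] at h2; linarith
    rw [mul_div_assoc]
    gcongr
    rw [le_div_iff₀ hbo', sum_mul]
    refine (sum_le_sum fun j hj => ?_).trans hx
    nlinarith [hw j hj, abs_nonneg (w j), sq_abs (w j)]
  · gcongr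
    rw [Real.le_sqrt (sum_nonneg fun j _ => abs_nonneg _) (by positivity)]
    calc (∑ j ∈ B, |w j|) ^ 2 ≤ B.card * ∑ j ∈ B, |w j| ^ 2 := sq_sum_le_card_mul_sum_sq
      _ ≤ s * x := by
        simp only [sq_abs]
        gcongr

theorem sum_abs_sub_mul_add_le_Fpot {ι : Type*} (S : Finset ι) (x b ρ : ι → ℝ) {κ bo y : ℝ}
    (hbo : 0 ≤ bo) (hbo_le : ∀ j ∈ S, x j ≠ 0 → bo ≤ |x j|)
    (hρ : ∀ j ∈ S, (b j ≠ 0 → ρ j = Real.sign (b j)) ∧ |ρ j| ≤ 1)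
    (hy : ∑ j ∈ S, (b j - x j) ^ 2 ≤ y) :
    ∑ j ∈ S, (|x j| - x j * ρ j) + y / (2 * κ) ≤ Fpot κ bo S.card y := by
  classical
  set B := S.filter fun j => |x j| - x j * ρ j ≠ 0
  have hB : ∀ j ∈ B, j ∈ S ∧ bo ≤ |x j| ∧ |x j| ≤ |b j - x j| := by
    intro j hj
    obtain ⟨hjS, hne⟩ := mem_filter.mp hj
    refine ⟨hjS, hbo_le j hjS fun h => hne (by simp [h]), ?_⟩
    exact abs_le_abs_sub_of_abs_sub_mul_ne_zero (hρ j hjS).1 hne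
  have hpen := two_mul_sum_abs_le B (fun j => b j - x j) hbo
    (fun j hj => (hB j hj).2.1.trans (hB j hj).2.2)
    ((sum_le_sum_of_subset_of_nonneg (filter_subset _ _) fun _ _ _ => sq_nonneg _).trans hy)
    (card_filter_le _ _)
  rw [Fpot, ← sum_filter_ne_zero, add_comm]
  gcongr
  calc ∑ j ∈ B, (|x j| - x j * ρ j) ≤ ∑ j ∈ B, 2 * |b j - x j| :=
        sum_le_sum fun j hj => (abs_sub_mul_le_two_mul_abs (hρ j (hB j hj).1).2).trans
          (by linarith [(hB j hj).2.2])
    _ = 2 * ∑ j ∈ B, |b j - x j| := (mul_sum _ _ _).symm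
    _ ≤ _ := hpen

theorem FpotInv_le {κ bo x y : ℝ} {s : ℕ} (hx : 0 ≤ x) (hy : y ≤ Fpot κ bo s x) :
    FpotInv κ bo s y ≤ x :=
  csInf_le ⟨0, fun _ h => h.1⟩ ⟨hx, hy⟩

section Parameters

variable {p : ℕ}

theorem bomin_nonneg (θo : Option (Fin p) → ℝ) : 0 ≤ bomin θo :=
  Real.sInf_nonneg (by rintro r ⟨j, _, rfl⟩; positivity)

theorem bomin_le {θo : Option (Fin p) → ℝ} {j : Fin p} (hj : θo (some j) ≠ 0) :
    bomin θo ≤ |θo (some j)| :=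
  csInf_le ⟨0, by rintro r ⟨j, _, rfl⟩; positivity⟩ ⟨j, hj, rfl⟩

theorem segPt_one_sub (θa θb : Option (Fin p) → ℝ) (μ : ℝ) :
    segPt θa θb (1 - μ) = θb + μ • (θa - θb) := by
  funext i
  simp only [segPt, Pi.add_apply, Pi.smul_apply, Pi.sub_apply, smul_eq_mul]
  ring

theorem sum_option_eq_add_sum {S : Finset (Fin p)} {f : Option (Fin p) → ℝ}
    (hf : ∀ j, j ∉ S → f (some j) = 0) :
    ∑ i, f i = f none + ∑ j ∈ S, f (some j) := by
  rw [Fintype.sum_option, ← sum_subset (subset_univ S) fun j _ hj => hf j hj]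

theorem dOrcC_sq (S : Finset (Fin p)) (θo : Option (Fin p) → ℝ) (a' : ℝ → ℝ)
    (b' : ℝ → Fin p → ℝ) (u : ℝ) :
    dOrcC S θo a' b' u ^ 2 = (a' u - θo none) ^ 2 + ∑ j ∈ S, (b' u j - θo (some j)) ^ 2 :=
  Real.sq_sqrt (by positivity)

noncomputable def oraclePotential (S : Finset (Fin p)) (θo : Option (Fin p) → ℝ) (κ : ℝ)
    (a' : ℝ → ℝ) (b' ρ' : ℝ → Fin p → ℝ) (u : ℝ) : ℝ :=
  (∑ j ∈ S, |θo (some j)|) - (∑ j ∈ S, θo (some j) * ρ' u j) +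
    (dOrcC S θo a' b' u) ^ 2 / (2 * κ)

end Parameters

section OracleDynamics

variable {p : ℕ} {S : Finset (Fin p)} {θo : Option (Fin p) → ℝ} {κ : ℝ}
  {a' : ℝ → ℝ} {b' ρ' : ℝ → Fin p → ℝ}

theorem hasDerivAt_oraclePotential {t ad : ℝ} {bd ρd : Fin p → ℝ} (ha : HasDerivAt a' ad t)
    (hb : ∀ j ∈ S, HasDerivAt (fun u => b' u j) (bd j) t)
    (hρ : ∀ j ∈ S, HasDerivAt (fun u => ρ' u j) (ρd j) t) :
    HasDerivAt (oraclePotential S θo κ a' b' ρ')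
      (-∑ j ∈ S, θo (some j) * ρd j +
        ((a' t - θo none) * ad + ∑ j ∈ S, (b' t j - θo (some j)) * bd j) / κ) t := by
  have hΨ : oraclePotential S θo κ a' b' ρ' = fun u => (∑ j ∈ S, |θo (some j)|) -
      (∑ j ∈ S, θo (some j) * ρ' u j) +
      ((a' u - θo none) ^ 2 + ∑ j ∈ S, (b' u j - θo (some j)) ^ 2) / (2 * κ) :=
    funext fun u => by rw [oraclePotential, dOrcC_sq]
  rw [hΨ]
  have hdist := ((ha.sub_const (θo none)).fun_pow 2).add
    (HasDerivAt.fun_sum fun j hj => ((hb j hj).sub_const (θo (some j))).fun_pow 2)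
  refine (((HasDerivAt.fun_sum fun j hj => (hρ j hj).const_mul (θo (some j))).const_sub _).add
    (hdist.div_const _)).congr_deriv ?_
  simp only [Nat.cast_ofNat, Nat.add_one_sub_one, pow_one, mul_assoc, ← mul_sum, ← mul_add]
  rw [mul_div_mul_left _ _ two_ne_zero]

theorem hasDerivAt_oraclePotential_of_ode {t ad : ℝ} {bd ρd : Fin p → ℝ}
    {g : Option (Fin p) → ℝ} (hθoS : ∀ j, j ∉ S → θo (some j) = 0)
    (hbS : ∀ j, j ∉ S → b' t j = 0) (ha : HasDerivAt a' ad t)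
    (hb : ∀ j ∈ S, HasDerivAt (fun u => b' u j) (bd j) t)
    (hρ : ∀ j ∈ S, HasDerivAt (fun u => ρ' u j) (ρd j) t)
    (hcompl : ∀ j ∈ S, b' t j * ρd j = 0) (hodeα : ad / κ = -g none)
    (hodeβ : ∀ j ∈ S, ρd j + bd j / κ = -g (some j)) :
    HasDerivAt (oraclePotential S θo κ a' b' ρ') (-∑ i, (pack (a' t) (b' t) - θo) i * g i) t := by
  refine (hasDerivAt_oraclePotential ha hb hρ).congr_deriv ?_
  have hβ : ∑ j ∈ S, (b' t j - θo (some j)) * g (some j) =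
      ∑ j ∈ S, (θo (some j) * ρd j - (b' t j - θo (some j)) * bd j / κ) :=
    sum_congr rfl fun j hj => by
      linear_combination (b' t j - θo (some j)) * hodeβ j hj - hcompl j hj
  rw [sum_option_eq_add_sum fun j hj => by simp [pack, hbS j hj, hθoS j hj]]
  simp only [pack, Pi.sub_apply, Option.elim_none, Option.elim_some]
  rw [hβ, sum_sub_distrib, ← sum_div]
  linear_combination (a' t - θo none) * hodeα

theorem mul_hasDerivAt_eq_zero_of_subgradient (hb0 : ∀ j, b' 0 j = 0)
    (hsub : ∀ t : ℝ, 0 ≤ t → ∀ j ∈ S,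
      (b' t j ≠ 0 → ρ' t j = Real.sign (b' t j)) ∧ |ρ' t j| ≤ 1)
    {t ρd : ℝ} (ht : 0 ≤ t) {j : Fin p} (hj : j ∈ S)
    (hρ : HasDerivAt (fun u => ρ' u j) ρd t) : b' t j * ρd = 0 := by
  -- `ρ'` is only constrained for `u ≥ 0`, so at `t = 0` we use `β'(0) = 0` instead
  rcases ht.eq_or_lt with rfl | htpos
  · rw [hb0, zero_mul]
  by_cases hbt : b' t j = 0
  · rw [hbt, zero_mul]
  rw [hρ.eq_zero_of_abs_le_one ?_ ?_, mul_zero]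
  · filter_upwards [Ioi_mem_nhds htpos] with u hu using (hsub u (le_of_lt hu) j hj).2
  · rw [(hsub t ht j hj).1 hbt]
    rcases Real.sign_apply_eq_of_ne_zero _ hbt with h | h <;> simp [h]

theorem oraclePotential_le_Fpot {t : ℝ}
    (hsub : ∀ j ∈ S, (b' t j ≠ 0 → ρ' t j = Real.sign (b' t j)) ∧ |ρ' t j| ≤ 1) :
    oraclePotential S θo κ a' b' ρ' t ≤
      Fpot κ (bomin θo) S.card (dOrcC S θo a' b' t ^ 2) := by
  rw [oraclePotential, ← sum_sub_distrib]
  refine sum_abs_sub_mul_add_le_Fpot S (fun j => θo (some j)) (b' t) (ρ' t) (bomin_nonneg θo)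
    (fun j _ hj => bomin_le hj) hsub ?_
  rw [dOrcC_sq]
  linarith [sq_nonneg (a' t - θo none)]

end OracleDynamics

theorem glbiss_bihari_general {p : ℕ}
    (ℓ : (Option (Fin p) → ℝ) → ℝ) (hℓ : ContDiff ℝ 2 ℓ)
    (θstar : Option (Fin p) → ℝ) (S : Finset (Fin p))
    (θo : Option (Fin p) → ℝ) (hθo : OracleEst ℓ S θo)
    (κ : ℝ)
    -- the oracle dynamics, with its (coordinatewise) derivatives
    (a' : ℝ → ℝ) (b' ρ' : ℝ → Fin p → ℝ)
    (ad : ℝ → ℝ) (bd ρd : ℝ → Fin p → ℝ)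
    (hb0 : ∀ j, b' 0 j = 0)
    (hsupp : ∀ t j, j ∉ S → ρ' t j = 0 ∧ b' t j = 0)
    (ha_deriv : ∀ t : ℝ, 0 ≤ t → HasDerivAt a' (ad t) t)
    (hb_deriv : ∀ t : ℝ, 0 ≤ t → ∀ j ∈ S, HasDerivAt (fun u => b' u j) (bd t j) t)
    (hρ_deriv : ∀ t : ℝ, 0 ≤ t → ∀ j ∈ S, HasDerivAt (fun u => ρ' u j) (ρd t j) t)
    (hODEα : ∀ t : ℝ, 0 ≤ t →
      ad t / κ = -gradAt ℓ (pack (a' t) (b' t)) none)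
    (hODEβ : ∀ t : ℝ, 0 ≤ t → ∀ j ∈ S,
      ρd t j + bd t j / κ = -gradAt ℓ (pack (a' t) (b' t)) (some j))
    (hsub : ∀ t : ℝ, 0 ≤ t → ∀ j ∈ S,
      (b' t j ≠ 0 → ρ' t j = Real.sign (b' t j)) ∧ |ρ' t j| ≤ 1)
    (lam Lam : ℝ) (hlam : 0 < lam)
    (hRSC : RSCcondC ℓ S θstar θo a' b' lam Lam) :
    ∀ t : ℝ, 0 ≤ t → ∀ D : ℝ,
      HasDerivAt (fun u => (∑ j ∈ S, |θo (some j)|) -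
          (∑ j ∈ S, θo (some j) * ρ' u j) + (dOrcC S θo a' b' u) ^ 2 / (2 * κ)) D t →
      D ≤ -(lam * FpotInv κ (bomin θo) S.card
          ((∑ j ∈ S, |θo (some j)|) - (∑ j ∈ S, θo (some j) * ρ' t j) +
            (dOrcC S θo a' b' t) ^ 2 / (2 * κ))) := by
  intro t ht D hD
  set v := pack (a' t) (b' t) - θo
  have hv : ∀ j, j ∉ S → v (some j) = 0 := fun j hj => by
    simp [v, pack, (hsupp t j hj).2, hθo.1 j hj]
  have hdist : dOrcC S θo a' b' t ^ 2 = ∑ i, v i ^ 2 := by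
    rw [dOrcC_sq, sum_option_eq_add_sum fun j hj => by simp [hv j hj]]
    rfl
  have hderiv : D = -∑ i, v i * gradAt ℓ (θo + v) i := by
    rw [add_sub_cancel]
    exact hD.unique <| hasDerivAt_oraclePotential_of_ode hθo.1 (fun j hj => (hsupp t j hj).2)
      (ha_deriv t ht) (hb_deriv t ht) (hρ_deriv t ht)
      (fun j hj => mul_hasDerivAt_eq_zero_of_subgradient hb0 hsub ht hj (hρ_deriv t ht j hj))
      (hODEα t ht) (hODEβ t ht)
  have hmono := mul_sum_sq_le_sum_mul_gradAt_sub hℓ θo v fun μ hμ =>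
    (hRSC _ (Or.inl ⟨t, ht, 1 - μ, ⟨by linarith [hμ.2], by linarith [hμ.1]⟩,
      (segPt_one_sub _ _ _).symm⟩) v hv).1
  have hopt := hθo.sum_mul_gradAt_eq_zero (hℓ.differentiable two_ne_zero θo) hv
  have hinv : FpotInv κ (bomin θo) S.card (oraclePotential S θo κ a' b' ρ' t) ≤ ∑ i, v i ^ 2 :=
    hdist ▸ FpotInv_le (sq_nonneg _) (oraclePotential_le_Fpot (hsub t ht))
  change D ≤ -(lam * FpotInv κ (bomin θo) S.card (oraclePotential S θo κ a' b' ρ' t))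
  linarith [mul_le_mul_of_nonneg_left hinv hlam.le]

/-- **Generalized Bihari's inequality for the oracle dynamics of GLBISS.**
Under the continuous RSC, the potential
`Ψ(t) = ‖βᵒ_S‖₁ − ⟨βᵒ_S, ρ'_S(t)⟩ + d(t)²/(2κ)` satisfies
`dΨ(t)/dt ≤ −λ·F⁻¹(Ψ(t))` for all `t ≥ 0`. -/
theorem glbiss_bihari {p : ℕ}
    (ℓ : (Option (Fin p) → ℝ) → ℝ) (hℓ : ContDiff ℝ 2 ℓ)
    (θstar : Option (Fin p) → ℝ) (S : Finset (Fin p))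
    (hS : ∀ j, j ∈ S ↔ θstar (some j) ≠ 0)
    (θo : Option (Fin p) → ℝ) (hθo : OracleEst ℓ S θo)
    (κ : ℝ) (hκpos : 0 < κ)
    -- the oracle dynamics, with its (coordinatewise) derivatives
    (a' : ℝ → ℝ) (b' ρ' : ℝ → Fin p → ℝ)
    (ad : ℝ → ℝ) (bd ρd : ℝ → Fin p → ℝ)
    (hρ0 : ∀ j, ρ' 0 j = 0) (hb0 : ∀ j, b' 0 j = 0)
    (hsupp : ∀ t j, j ∉ S → ρ' t j = 0 ∧ b' t j = 0)
    (ha_deriv : ∀ t : ℝ, 0 ≤ t → HasDerivAt a' (ad t) t)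
    (hb_deriv : ∀ t : ℝ, 0 ≤ t → ∀ j ∈ S, HasDerivAt (fun u => b' u j) (bd t j) t)
    (hρ_deriv : ∀ t : ℝ, 0 ≤ t → ∀ j ∈ S, HasDerivAt (fun u => ρ' u j) (ρd t j) t)
    (hODEα : ∀ t : ℝ, 0 ≤ t →
      ad t / κ = -gradAt ℓ (pack (a' t) (b' t)) none)
    (hODEβ : ∀ t : ℝ, 0 ≤ t → ∀ j ∈ S,
      ρd t j + bd t j / κ = -gradAt ℓ (pack (a' t) (b' t)) (some j))
    (hsub : ∀ t : ℝ, 0 ≤ t → ∀ j ∈ S,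
      (b' t j ≠ 0 → ρ' t j = Real.sign (b' t j)) ∧ |ρ' t j| ≤ 1)
    (lam Lam : ℝ) (hlam : 0 < lam) (hLam : 0 < Lam)
    (hRSC : RSCcondC ℓ S θstar θo a' b' lam Lam) :
    ∀ t : ℝ, 0 ≤ t → ∀ D : ℝ,
      HasDerivAt (fun u => (∑ j ∈ S, |θo (some j)|) -
          (∑ j ∈ S, θo (some j) * ρ' u j) + (dOrcC S θo a' b' u) ^ 2 / (2 * κ)) D t →
      D ≤ -(lam * FpotInv κ (bomin θo) S.card
          ((∑ j ∈ S, |θo (some j)|) - (∑ j ∈ S, θo (some j) * ρ' t j) +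
            (dOrcC S θo a' b' t) ^ 2 / (2 * κ))) :=
  glbiss_bihari_general ℓ hℓ θstar S θo hθo κ a' b' ρ' ad bd ρd hb0 hsupp ha_deriv hb_deriv hρ_deriv
    hODEα hODEβ hsub lam Lam hlam hRSC
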